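/- Let û be a policy that is greedy with respect to Ĵ ∈ ℝ^S (i.e., T_û Ĵ = T Ĵ), with value function J_û = (I − αP_û)^{-1} g_û. Let ψ : S → (0,∞) with β_ψ = α max_a ‖P_aψ‖_{∞,ψ} < 1, and c ∈ ℝ₊^S. Then ‖J_û − Ĵ‖_{1,c} ≤ (cᵀψ / (1−β_ψ)) · ‖TĴ − Ĵ‖_{∞,ψ}. -/

import Mathlib

open Matrix

/-!
Write `e = J_û - Ĵ` and `d = TĴ - Ĵ`. Greediness gives `TĴ = g_û + αP_û Ĵ`, so `e = d + αP_û e`.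
Since `αP_û` is nonnegative and maps `ψ` below `β_ψ ψ`, taking `ψ`-weighted sup norms yields
`‖e‖_{∞,ψ} ≤ ‖d‖_{∞,ψ} + β_ψ ‖e‖_{∞,ψ}`, i.e. `‖e‖_{∞,ψ} ≤ ‖d‖_{∞,ψ} / (1 - β_ψ)`. Finally
`‖e‖_{1,c} ≤ (cᵀψ) ‖e‖_{∞,ψ}`.
-/

noncomputable def weightedSupNorm {S : Type*} (ψ f : S → ℝ) : ℝ :=
  ⨆ s, |f s| / ψ s

section WeightedSupNorm

variable {S : Type*} (ψ f : S → ℝ)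

lemma weightedSupNorm_nonneg (hψ : ∀ s, 0 ≤ ψ s) : 0 ≤ weightedSupNorm ψ f :=
  Real.iSup_nonneg fun s => div_nonneg (abs_nonneg _) (hψ s)

lemma abs_le_weightedSupNorm_mul [Finite S] {s : S} (hψ : 0 < ψ s) :
    |f s| ≤ weightedSupNorm ψ f * ψ s :=
  (div_le_iff₀ hψ).1 (le_ciSup (f := fun t => |f t| / ψ t) (Set.finite_range _).bddAbove s)

lemma weightedSupNorm_le {K : ℝ} (hψ : ∀ s, 0 < ψ s) (hK : 0 ≤ K)
    (h : ∀ s, |f s| ≤ K * ψ s) : weightedSupNorm ψ f ≤ K :=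
  Real.iSup_le (fun s => (div_le_iff₀ (hψ s)).2 (h s)) hK

lemma le_iSup_weightedSupNorm_mul {A : Type*} [Finite A] [Finite S] (F : A → S → ℝ) (a : A)
    {s : S} (hψ : 0 < ψ s) : F a s ≤ (⨆ b, weightedSupNorm ψ (F b)) * ψ s :=
  calc F a s ≤ weightedSupNorm ψ (F a) * ψ s :=
        (le_abs_self _).trans (abs_le_weightedSupNorm_mul ψ (F a) hψ)
    _ ≤ (⨆ b, weightedSupNorm ψ (F b)) * ψ s := by
        gcongr
        exact le_ciSup (Set.finite_range fun b => weightedSupNorm ψ (F b)).bddAbove a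

lemma sum_mul_abs_le_mul_weightedSupNorm [Fintype S] (c : S → ℝ) (hψ : ∀ s, 0 < ψ s)
    (hc : ∀ s, 0 ≤ c s) : ∑ s, c s * |f s| ≤ (∑ s, c s * ψ s) * weightedSupNorm ψ f := by
  rw [Finset.sum_mul]
  refine Finset.sum_le_sum fun s _ => ?_
  calc c s * |f s| ≤ c s * (weightedSupNorm ψ f * ψ s) :=
        mul_le_mul_of_nonneg_left (abs_le_weightedSupNorm_mul ψ f (hψ s)) (hc s)
    _ = c s * ψ s * weightedSupNorm ψ f := by ring

end WeightedSupNorm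

section NonnegMatrix

variable {m n : Type*} [Fintype n] {Q : Matrix m n ℝ}

lemma abs_mulVec_le_mulVec_abs (hQ : ∀ i j, 0 ≤ Q i j) (v : n → ℝ) (i : m) :
    |(Q *ᵥ v) i| ≤ (Q *ᵥ fun j => |v j|) i :=
  calc |(Q *ᵥ v) i| ≤ ∑ j, |Q i j * v j| := Finset.abs_sum_le_sum_abs _ _
    _ = (Q *ᵥ fun j => |v j|) i := by
        simp only [mulVec, dotProduct, abs_mul, abs_of_nonneg (hQ i _)]

lemma mulVec_mono_of_nonneg (hQ : ∀ i j, 0 ≤ Q i j) {v w : n → ℝ} (h : v ≤ w) :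
    Q *ᵥ v ≤ Q *ᵥ w :=
  fun i => dotProduct_le_dotProduct_of_nonneg_left h (hQ i)

end NonnegMatrix

/-- The bound `‖(I - Q)⁻¹‖_{∞,ψ} ≤ 1 / (1 - β)`, stated for `e = (I - Q)⁻¹ d`. -/
lemma weightedSupNorm_le_div_of_eq_add_mulVec {S : Type*} [Fintype S] {Q : Matrix S S ℝ}
    (hQ : ∀ i j, 0 ≤ Q i j) {ψ : S → ℝ} (hψ : ∀ s, 0 < ψ s) {β : ℝ} (hβ0 : 0 ≤ β)
    (hβ1 : β < 1) (hQψ : Q *ᵥ ψ ≤ β • ψ) {d e : S → ℝ} (he : e = d + Q *ᵥ e) :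
    weightedSupNorm ψ e ≤ weightedSupNorm ψ d / (1 - β) := by
  set M := weightedSupNorm ψ e
  set ε := weightedSupNorm ψ d
  have hM0 : 0 ≤ M := weightedSupNorm_nonneg ψ e fun s => (hψ s).le
  have habs_e : (fun j => |e j|) ≤ M • ψ := fun j => abs_le_weightedSupNorm_mul ψ e (hψ j)
  have hpointwise : ∀ s, |e s| ≤ (ε + β * M) * ψ s := fun s =>
    calc |e s| = |d s + (Q *ᵥ e) s| := by rw [← Pi.add_apply d, ← he]
      _ ≤ |d s| + (Q *ᵥ fun j => |e j|) s :=
          (abs_add_le _ _).trans (add_le_add_right (abs_mulVec_le_mulVec_abs hQ e s) _)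
      _ ≤ ε * ψ s + M * (Q *ᵥ ψ) s := by
          gcongr
          · exact abs_le_weightedSupNorm_mul ψ d (hψ s)
          · simpa only [mulVec_smul, Pi.smul_apply, smul_eq_mul] using
              mulVec_mono_of_nonneg hQ habs_e s
      _ ≤ ε * ψ s + M * (β * ψ s) := by gcongr; exact hQψ s
      _ = (ε + β * M) * ψ s := by ring
  have hε0 : 0 ≤ ε := weightedSupNorm_nonneg ψ d fun s => (hψ s).le
  have hM : M ≤ ε + β * M := weightedSupNorm_le ψ e hψ (by positivity) hpointwise
  rw [le_div_iff₀ (by linarith)]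
  linarith

def policyMatrix {S A : Type*} (P : A → Matrix S S ℝ) (u : S → A) : Matrix S S ℝ :=
  Matrix.of fun s => P (u s) s

lemma policyMatrix_mulVec_apply {S A : Type*} [Fintype S] (P : A → Matrix S S ℝ) (u : S → A)
    (v : S → ℝ) (s : S) : (policyMatrix P u *ᵥ v) s = (P (u s) *ᵥ v) s :=
  rfl

theorem stmt19_general {S A : Type*} [Fintype S] [Fintype A]
    (α : ℝ) (hα0 : 0 < α)
    (g : A → S → ℝ) (P : A → Matrix S S ℝ)
    (hPnn : ∀ a s s', 0 ≤ P a s s')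
    (ψ : S → ℝ) (hψpos : ∀ s, 0 < ψ s)
    (βψ : ℝ) (hβψ : βψ = α * ⨆ a, ⨆ s, |(P a).mulVec ψ s| / ψ s)
    (hβψ1 : βψ < 1)
    (c : S → ℝ) (hc : ∀ s, 0 ≤ c s)
    (Jhat : S → ℝ) (uhat : S → A)
    (hgreedy : ∀ s, g (uhat s) s + α * (P (uhat s)).mulVec Jhat s
      = ⨆ a, (g a s + α * (P a).mulVec Jhat s))
    (Ju : S → ℝ)
    (hJu : ∀ s, Ju s = g (uhat s) s + α * (P (uhat s)).mulVec Ju s) :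
    ∑ s, c s * |Ju s - Jhat s|
      ≤ ((∑ s, c s * ψ s) / (1 - βψ))
        * ⨆ s, |(⨆ a, (g a s + α * (P a).mulVec Jhat s)) - Jhat s| / ψ s := by
  set TJ : S → ℝ := fun s => ⨆ a, (g a s + α * (P a).mulVec Jhat s)
  set Q := α • policyMatrix P uhat
  have hQ : ∀ i j, 0 ≤ Q i j := fun i j => mul_nonneg hα0.le (hPnn _ _ _)
  have hβψ0 : 0 ≤ βψ := hβψ ▸ mul_nonneg hα0.le
    (Real.iSup_nonneg fun a => weightedSupNorm_nonneg _ _ fun s => (hψpos s).le)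
  have hQψ : Q *ᵥ ψ ≤ βψ • ψ := fun s =>
    calc (Q *ᵥ ψ) s = α * (P (uhat s) *ᵥ ψ) s := by rw [smul_mulVec]; rfl
      _ ≤ α * ((⨆ a, weightedSupNorm ψ (P a *ᵥ ψ)) * ψ s) := by
          gcongr
          exact le_iSup_weightedSupNorm_mul ψ (fun a => P a *ᵥ ψ) (uhat s) (hψpos s)
      _ = βψ * ψ s := by rw [hβψ]; unfold weightedSupNorm; ring
  have he : Ju - Jhat = (TJ - Jhat) + Q *ᵥ (Ju - Jhat) := by
    ext s
    rw [smul_mulVec, mulVec_sub]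
    simp only [Pi.add_apply, Pi.sub_apply, Pi.smul_apply, smul_eq_mul, policyMatrix_mulVec_apply]
    linear_combination hJu s + hgreedy s
  calc ∑ s, c s * |Ju s - Jhat s|
      ≤ (∑ s, c s * ψ s) * weightedSupNorm ψ (Ju - Jhat) :=
        sum_mul_abs_le_mul_weightedSupNorm ψ _ c hψpos hc
    _ ≤ (∑ s, c s * ψ s) * (weightedSupNorm ψ (TJ - Jhat) / (1 - βψ)) := by
        gcongr
        · exact Finset.sum_nonneg fun s _ => mul_nonneg (hc s) (hψpos s).le
        · exact weightedSupNorm_le_div_of_eq_add_mulVec hQ hψpos hβψ0 hβψ1 hQψ he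
    _ = _ := by rw [mul_div_assoc', div_mul_eq_mul_div]; rfl

/-- if û is greedy w.r.t. Ĵ and J_û is its value function, then
‖J_û − Ĵ‖_{1,c} ≤ (cᵀψ/(1−β_ψ)) · ‖TĴ − Ĵ‖_{∞,ψ}. -/
theorem stmt19 {S A : Type*} [Fintype S] [Nonempty S] [Fintype A] [Nonempty A]
    (α : ℝ) (hα0 : 0 < α) (hα1 : α < 1)
    (g : A → S → ℝ) (P : A → Matrix S S ℝ)
    (hPnn : ∀ a s s', 0 ≤ P a s s') (hProw : ∀ a s, ∑ s', P a s s' = 1)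
    (ψ : S → ℝ) (hψpos : ∀ s, 0 < ψ s)
    (βψ : ℝ) (hβψ : βψ = α * ⨆ a, ⨆ s, |(P a).mulVec ψ s| / ψ s)
    (hβψ1 : βψ < 1)
    (c : S → ℝ) (hc : ∀ s, 0 ≤ c s)
    (Jhat : S → ℝ) (uhat : S → A)
    (hgreedy : ∀ s, g (uhat s) s + α * (P (uhat s)).mulVec Jhat s
      = ⨆ a, (g a s + α * (P a).mulVec Jhat s))
    (Ju : S → ℝ)
    (hJu : ∀ s, Ju s = g (uhat s) s + α * (P (uhat s)).mulVec Ju s) :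
    ∑ s, c s * |Ju s - Jhat s|
      ≤ ((∑ s, c s * ψ s) / (1 - βψ))
        * ⨆ s, |(⨆ a, (g a s + α * (P a).mulVec Jhat s)) - Jhat s| / ψ s :=
  stmt19_general α hα0 g P hPnn ψ hψpos βψ hβψ hβψ1 c hc Jhat uhat hgreedy Ju hJu
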